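/- Let A be a symmetric, irreducible, nonnegative n×n real matrix and P = {P₁,...,P_k} a partition of [n] such that A[Pᵢ,Pⱼ] is regular (equal row sums and equal column sums) for all 1 ≤ i < j ≤ k. Then μ₁(A) = μ₁(A|P×P) if and only if A[Pᵢ,Pᵢ] is regular for every i ∈ [k]. -/

import Mathlib

def partSet {n k : ℕ} (P : Fin n → Fin k) (i : Fin k) : Finset (Fin n) :=
  Finset.univ.filter (fun v => P v = i)

noncomputable def quotMat {m n k l : ℕ} (A : Matrix (Fin m) (Fin n) ℝ)
    (P : Fin m → Fin k) (Q : Fin n → Fin l) : Matrix (Fin k) (Fin l) ℝ :=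
  fun p q => (1 / Real.sqrt (((partSet P p).card : ℝ) * ((partSet Q q).card : ℝ))) *
    ∑ i ∈ partSet P p, ∑ j ∈ partSet Q q, A i j

def BlockRegular {m n : ℕ} (A : Matrix (Fin m) (Fin n) ℝ)
    (R : Finset (Fin m)) (C : Finset (Fin n)) : Prop :=
  (∀ i ∈ R, ∀ i' ∈ R, ∑ j ∈ C, A i j = ∑ j ∈ C, A i' j) ∧
  (∀ j ∈ C, ∀ j' ∈ C, ∑ i ∈ R, A i j = ∑ i ∈ R, A i j')

def MatIrred {n : ℕ} (A : Matrix (Fin n) (Fin n) ℝ) : Prop :=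
  ∀ S : Finset (Fin n), S.Nonempty → S ≠ Finset.univ →
    ∃ i ∈ S, ∃ j ∈ Sᶜ, A i j ≠ 0

/-!
Let `S` be the `n × k` matrix whose `p`-th column is the normalized indicator vector of the part
`P⁻¹(p)`. Then `SᵀS = 1` and `A|P×P = SᵀAS`, so every Rayleigh quotient of the quotient matrix
is one of `A`, which gives `μ₁(A|P×P) ≤ μ₁(A)`.

If equality holds, `S y` is a top eigenvector of `A` for a top eigenvector `y` of the quotient.
By the Perron–Frobenius argument (`|x|` is again a top eigenvector, and irreducibility forbids a
zero entry of a nonnegative eigenvector) no entry of `S y` vanishes. Since `S y` is constant on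
parts and the off-diagonal blocks have constant row sums, comparing `(A S y)_i` for two rows `i`
of one part leaves only the diagonal block, whose row sums must therefore agree.

Conversely, if every block has constant row sums, then `AS = S (A|P×P)`; transposing,
`Sᵀ A = (A|P×P) Sᵀ`, so `Sᵀ` maps the positive Perron vector of `A` to an eigenvector of the
quotient with eigenvalue `μ₁(A)`.
-/

open Matrix Finset

lemma dotProduct_mulVec_le_abs {m : Type*} [Fintype m] {A : Matrix m m ℝ}
    (hnonneg : ∀ i j, 0 ≤ A i j) (x : m → ℝ) : x ⬝ᵥ A *ᵥ x ≤ |x| ⬝ᵥ A *ᵥ |x| := by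
  simp only [dotProduct, mulVec, mul_sum, Pi.abs_apply]
  refine sum_le_sum fun i _ => sum_le_sum fun j _ => ?_
  calc x i * (A i j * x j) ≤ |x i * (A i j * x j)| := le_abs_self _
    _ = |x i| * (A i j * |x j|) := by rw [abs_mul, abs_mul, abs_of_nonneg (hnonneg i j)]

lemma dotProduct_transpose_mul_mul_mulVec {m l : Type*} [Fintype m] [Fintype l]
    (S : Matrix m l ℝ) (A : Matrix m m ℝ) (y : l → ℝ) :
    y ⬝ᵥ (Sᵀ * A * S) *ᵥ y = S *ᵥ y ⬝ᵥ A *ᵥ S *ᵥ y := by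
  rw [← mulVec_mulVec, ← mulVec_mulVec, dotProduct_mulVec, vecMul_transpose]

lemma smul_one_sub_mulVec {m : Type*} [Fintype m] [DecidableEq m] (A : Matrix m m ℝ) (μ : ℝ)
    (x : m → ℝ) : (μ • 1 - A) *ᵥ x = μ • x - A *ᵥ x := by
  rw [sub_mulVec, smul_mulVec, one_mulVec]

namespace Matrix.IsHermitian

variable {m : Type*} [Fintype m] [DecidableEq m] {A : Matrix m m ℝ} (hA : A.IsHermitian)

theorem posSemidef_smul_one_sub {μ : ℝ} (hμ : ∀ i, hA.eigenvalues i ≤ μ) :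
    (μ • 1 - A).PosSemidef := by
  set U : Matrix m m ℝ := (hA.eigenvectorUnitary : Matrix m m ℝ)
  have hU : U * star U = 1 := Unitary.coe_mul_star_self _
  have hdiag : (diagonal fun i => μ - hA.eigenvalues i).PosSemidef :=
    PosSemidef.diagonal fun i => sub_nonneg.mpr (hμ i)
  -- spectral theorem: `μ • 1 - A = U (μ - diag λ) Uᴴ`
  convert hdiag.mul_mul_conjTranspose_same U using 1
  conv_lhs => rw [hA.spectral_theorem]
  rw [← star_eq_conjTranspose, ← diagonal_sub, Unitary.conjStarAlgAut_apply,
    RCLike.ofReal_real_eq_id, Function.id_comp, mul_sub, sub_mul, ← smul_one_eq_diagonal,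
    mul_smul_comm, mul_one, smul_mul_assoc, hU]

theorem dotProduct_mulVec_le {μ : ℝ} (hμ : ∀ i, hA.eigenvalues i ≤ μ) (x : m → ℝ) :
    x ⬝ᵥ A *ᵥ x ≤ μ * (x ⬝ᵥ x) := by
  have := (hA.posSemidef_smul_one_sub hμ).dotProduct_mulVec_nonneg x
  rwa [star_trivial, smul_one_sub_mulVec, dotProduct_sub, dotProduct_smul, smul_eq_mul,
    sub_nonneg] at this

theorem le_of_dotProduct_mulVec_eq {μ t : ℝ} (hμ : ∀ i, hA.eigenvalues i ≤ μ) {x : m → ℝ}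
    (hx : x ≠ 0) (h : x ⬝ᵥ A *ᵥ x = t * (x ⬝ᵥ x)) : t ≤ μ := by
  have hpos : 0 < x ⬝ᵥ x := by simpa using dotProduct_star_self_pos_iff.mpr hx
  exact le_of_mul_le_mul_right (h ▸ hA.dotProduct_mulVec_le hμ x) hpos

theorem mulVec_eq_smul_of_dotProduct_mulVec_eq {μ : ℝ} (hμ : ∀ i, hA.eigenvalues i ≤ μ)
    {x : m → ℝ} (h : x ⬝ᵥ A *ᵥ x = μ * (x ⬝ᵥ x)) : A *ᵥ x = μ • x := by
  have := ((hA.posSemidef_smul_one_sub hμ).dotProduct_mulVec_zero_iff x).mp (by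
    rw [star_trivial, smul_one_sub_mulVec, dotProduct_sub, dotProduct_smul, smul_eq_mul, h,
      sub_self])
  rwa [smul_one_sub_mulVec, sub_eq_zero, eq_comm] at this

lemma eigenvalues_le_iSup (i : m) : hA.eigenvalues i ≤ ⨆ j, hA.eigenvalues j :=
  le_ciSup (Set.finite_range _).bddAbove i

theorem exists_mulVec_eq_iSup_smul [Nonempty m] :
    ∃ v : m → ℝ, v ≠ 0 ∧ A *ᵥ v = (⨆ i, hA.eigenvalues i) • v := by
  obtain ⟨i, hi⟩ := exists_eq_ciSup_of_finite (f := hA.eigenvalues)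
  refine ⟨hA.eigenvectorBasis i, ?_, hi ▸ hA.mulVec_eigenvectorBasis i⟩
  exact fun h => hA.eigenvectorBasis.orthonormal.ne_zero i (WithLp.ofLp_injective 2 h)

theorem mulVec_abs_eq_iSup_smul (hnonneg : ∀ i j, 0 ≤ A i j) {x : m → ℝ}
    (hx : A *ᵥ x = (⨆ i, hA.eigenvalues i) • x) :
    A *ᵥ |x| = (⨆ i, hA.eigenvalues i) • |x| := by
  have habs : |x| ⬝ᵥ |x| = x ⬝ᵥ x := by simp [dotProduct, abs_mul_abs_self]
  refine hA.mulVec_eq_smul_of_dotProduct_mulVec_eq hA.eigenvalues_le_iSup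
    (le_antisymm (hA.dotProduct_mulVec_le hA.eigenvalues_le_iSup |x|) ?_)
  calc (⨆ i, hA.eigenvalues i) * (|x| ⬝ᵥ |x|) = x ⬝ᵥ A *ᵥ x := by
        rw [habs, hx, dotProduct_smul, smul_eq_mul]
    _ ≤ |x| ⬝ᵥ A *ᵥ |x| := dotProduct_mulVec_le_abs hnonneg x

end Matrix.IsHermitian

section Perron

variable {m : ℕ} {A : Matrix (Fin m) (Fin m) ℝ}

theorem MatIrred.pos_of_mulVec_eq_smul (hirr : MatIrred A) (hnonneg : ∀ i j, 0 ≤ A i j)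
    {z : Fin m → ℝ} {t : ℝ} (hz : 0 ≤ z) (hz0 : z ≠ 0) (h : A *ᵥ z = t • z) (i : Fin m) :
    0 < z i := by
  by_contra hi
  set T := univ.filter fun j => z j = 0
  have hT : T.Nonempty := ⟨i, by simpa [T] using le_antisymm (not_lt.mp hi) (hz i)⟩
  have hTu : T ≠ univ := fun hT =>
    hz0 (funext fun j => (mem_filter.mp (hT ▸ mem_univ j : j ∈ T)).2)
  -- an edge from the zero set `T` of `z` to its support makes `(A z)_b > 0 = t z_b`
  obtain ⟨b, hb, a, ha, hba⟩ := hirr T hT hTu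
  have hzb : z b = 0 := (mem_filter.mp hb).2
  have hza : 0 < z a := (hz a).lt_of_ne' (by simpa [T] using ha)
  have hAz : (A *ᵥ z) b = 0 := by rw [h, Pi.smul_apply, hzb, smul_zero]
  have hle : A b a * z a ≤ (A *ᵥ z) b :=
    single_le_sum (f := fun j => A b j * z j) (fun j _ => mul_nonneg (hnonneg b j) (hz j))
      (mem_univ a)
  have hpos : 0 < A b a * z a := mul_pos ((hnonneg b a).lt_of_ne' hba) hza
  linarith

theorem MatIrred.abs_pos_of_mulVec_eq_iSup_smul (hirr : MatIrred A) (hA : A.IsHermitian)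
    (hnonneg : ∀ i j, 0 ≤ A i j) {x : Fin m → ℝ} (hx0 : x ≠ 0)
    (hx : A *ᵥ x = (⨆ i, hA.eigenvalues i) • x) (i : Fin m) : 0 < |x i| :=
  hirr.pos_of_mulVec_eq_smul hnonneg (abs_nonneg x)
    (fun h => hx0 (funext fun j => abs_eq_zero.mp (congrFun h j)))
    (hA.mulVec_abs_eq_iSup_smul hnonneg hx) i

end Perron

section Partition

variable {m n k l : ℕ}

noncomputable def partCharMat (P : Fin n → Fin k) : Matrix (Fin n) (Fin k) ℝ :=
  fun i p => if P i = p then (√(#(partSet P p) : ℝ))⁻¹ else 0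

@[simp]
lemma mem_partSet {P : Fin n → Fin k} {i : Fin n} {p : Fin k} : i ∈ partSet P p ↔ P i = p := by
  simp [partSet]

lemma sqrt_card_partSet_pos {P : Fin n → Fin k} {i : Fin n} {p : Fin k} (hi : P i = p) :
    0 < √(#(partSet P p) : ℝ) :=
  Real.sqrt_pos.mpr (Nat.cast_pos.mpr (card_pos.mpr ⟨i, mem_partSet.mpr hi⟩))

lemma partCharMat_mulVec_apply (P : Fin n → Fin k) (y : Fin k → ℝ) (i : Fin n) :
    (partCharMat P *ᵥ y) i = y (P i) / √(#(partSet P (P i)) : ℝ) := by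
  simp [mulVec, dotProduct, partCharMat, div_eq_inv_mul]

lemma transpose_partCharMat_mulVec_apply (P : Fin n → Fin k) (z : Fin n → ℝ) (p : Fin k) :
    ((partCharMat P)ᵀ *ᵥ z) p = (∑ i ∈ partSet P p, z i) / √(#(partSet P p) : ℝ) := by
  simp [mulVec, dotProduct, partCharMat, partSet, sum_filter, div_eq_inv_mul, mul_sum]

lemma mul_partCharMat_apply (A : Matrix (Fin m) (Fin n) ℝ) (Q : Fin n → Fin l) (i : Fin m)
    (q : Fin l) :
    (A * partCharMat Q) i q = (∑ j ∈ partSet Q q, A i j) / √(#(partSet Q q) : ℝ) := by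
  simp [mul_apply, partCharMat, partSet, sum_filter, div_eq_mul_inv, sum_mul]

lemma quotMat_eq_transpose_mul_mul (A : Matrix (Fin m) (Fin n) ℝ) (P : Fin m → Fin k)
    (Q : Fin n → Fin l) :
    quotMat A P Q = (partCharMat P)ᵀ * A * partCharMat Q := by
  ext p q
  rw [Matrix.mul_assoc, mul_apply]
  simp only [mul_partCharMat_apply, transpose_apply, partCharMat, ite_mul, zero_mul, ← sum_filter]
  rw [quotMat, ← partSet, ← mul_sum, ← sum_div, Real.sqrt_mul (Nat.cast_nonneg _)]
  ring

lemma transpose_partCharMat_mul_self {P : Fin n → Fin k} (hsurj : Function.Surjective P) :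
    (partCharMat P)ᵀ * partCharMat P = 1 := by
  ext p q
  obtain ⟨i, rfl⟩ := hsurj p
  have hpos := sqrt_card_partSet_pos (P := P) (i := i) rfl
  rw [mul_apply, one_apply]
  simp only [transpose_apply, partCharMat, ite_mul, zero_mul, ← sum_filter]
  split_ifs with h
  · subst h
    rw [← partSet, sum_congr rfl fun j hj => by rw [if_pos (mem_partSet.mp hj)], sum_const,
      nsmul_eq_mul, ← mul_inv, Real.mul_self_sqrt (Nat.cast_nonneg _)]
    exact mul_inv_cancel₀ (Real.sqrt_pos.mp hpos).ne'
  · exact sum_eq_zero fun j hj => by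
      rw [if_neg fun hq => h ((mem_filter.mp hj).2.symm.trans hq), mul_zero]

lemma partCharMat_mul_apply (P : Fin n → Fin k) (B : Matrix (Fin k) (Fin l) ℝ) (i : Fin n)
    (q : Fin l) : (partCharMat P * B) i q = B (P i) q / √(#(partSet P (P i)) : ℝ) :=
  partCharMat_mulVec_apply P (fun p => B p q) i

def BlockRowRegular (A : Matrix (Fin m) (Fin n) ℝ) (R : Finset (Fin m)) (C : Finset (Fin n)) :
    Prop :=
  ∀ i ∈ R, ∀ i' ∈ R, ∑ j ∈ C, A i j = ∑ j ∈ C, A i' j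

theorem mul_partCharMat_eq_of_blockRowRegular {A : Matrix (Fin m) (Fin n) ℝ} {P : Fin m → Fin k}
    {Q : Fin n → Fin l} (hrow : ∀ p q, BlockRowRegular A (partSet P p) (partSet Q q)) :
    A * partCharMat Q = partCharMat P * quotMat A P Q := by
  ext i q
  have hsum : ∑ i' ∈ partSet P (P i), ∑ j ∈ partSet Q q, A i' j
      = #(partSet P (P i)) * ∑ j ∈ partSet Q q, A i j := by
    rw [sum_congr rfl fun i' hi' => hrow _ q i' hi' i (mem_partSet.mpr rfl), sum_const,
      nsmul_eq_mul]
  have ha := sqrt_card_partSet_pos (P := P) (i := i) rfl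
  rw [mul_partCharMat_apply, partCharMat_mul_apply, quotMat, hsum,
    Real.sqrt_mul (Nat.cast_nonneg _)]
  field_simp
  rw [Real.sq_sqrt (Nat.cast_nonneg _)]

theorem blockRowRegular_of_mulVec_partCharMat_eq_smul {A : Matrix (Fin n) (Fin n) ℝ}
    {P : Fin n → Fin k} {y : Fin k → ℝ} {μ : ℝ}
    (h : A *ᵥ (partCharMat P *ᵥ y) = μ • (partCharMat P *ᵥ y)) {p : Fin k} (hyp : y p ≠ 0)
    (hoff : ∀ q ≠ p, BlockRowRegular A (partSet P p) (partSet P q)) :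
    BlockRowRegular A (partSet P p) (partSet P p) := by
  intro i hi i' hi'
  have hM : (A * partCharMat P) *ᵥ y = μ • (partCharMat P *ᵥ y) := by rw [← mulVec_mulVec, h]
  have hMi : ((A * partCharMat P) *ᵥ y) i = ((A * partCharMat P) *ᵥ y) i' := by
    rw [hM, Pi.smul_apply, Pi.smul_apply, partCharMat_mulVec_apply, partCharMat_mulVec_apply,
      mem_partSet.mp hi, mem_partSet.mp hi']
  have hdiff : ∑ q, ((A * partCharMat P) i q - (A * partCharMat P) i' q) * y q = 0 := by
    simp only [sub_mul, sum_sub_distrib]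
    exact sub_eq_zero.mpr hMi
  rw [sum_eq_single p (fun q _ hq => by
      rw [mul_partCharMat_apply, mul_partCharMat_apply, hoff q hq i hi i' hi', sub_self, zero_mul])
    (by simp)] at hdiff
  have hMp := sub_eq_zero.mp ((mul_eq_zero.mp hdiff).resolve_right hyp)
  rwa [mul_partCharMat_apply, mul_partCharMat_apply,
    div_left_inj' (sqrt_card_partSet_pos (mem_partSet.mp hi)).ne'] at hMp

lemma transpose_partCharMat_mulVec_pos {P : Fin n → Fin k} {z : Fin n → ℝ} (hz : ∀ i, 0 < z i)
    (i : Fin n) : 0 < ((partCharMat P)ᵀ *ᵥ z) (P i) := by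
  rw [transpose_partCharMat_mulVec_apply]
  exact div_pos (sum_pos (fun j _ => hz j) ⟨i, mem_partSet.mpr rfl⟩)
    (sqrt_card_partSet_pos rfl)

theorem BlockRowRegular.blockRegular {A : Matrix (Fin n) (Fin n) ℝ} (hA : A.IsHermitian)
    {R : Finset (Fin n)} (h : BlockRowRegular A R R) : BlockRegular A R R := by
  refine ⟨h, fun j hj j' hj' => ?_⟩
  have hsymm : ∀ i j, A i j = A j i := fun i j => by
    simpa using congrFun (congrFun hA j) i
  simp only [hsymm _ j, hsymm _ j']
  exact h j hj j' hj'

theorem quotMat_mulVec_transpose_partCharMat {A : Matrix (Fin n) (Fin n) ℝ} (hA : A.IsHermitian)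
    {P : Fin n → Fin k} (hB : (quotMat A P P).IsHermitian)
    (hrow : ∀ p q, BlockRowRegular A (partSet P p) (partSet P q)) {z : Fin n → ℝ} {t : ℝ}
    (hz : A *ᵥ z = t • z) :
    quotMat A P P *ᵥ ((partCharMat P)ᵀ *ᵥ z) = t • ((partCharMat P)ᵀ *ᵥ z) := by
  have h := congrArg transpose (mul_partCharMat_eq_of_blockRowRegular hrow)
  rw [transpose_mul, transpose_mul, ← conjTranspose_eq_transpose_of_trivial A, hA.eq,
    ← conjTranspose_eq_transpose_of_trivial (quotMat A P P), hB.eq] at h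
  rw [mulVec_mulVec, ← h, ← mulVec_mulVec, hz, mulVec_smul]

lemma partCharMat_mulVec_ne_zero {P : Fin n → Fin k} (hsurj : Function.Surjective P)
    {y : Fin k → ℝ} (hy : y ≠ 0) : partCharMat P *ᵥ y ≠ 0 := fun h => hy (by
  rw [← one_mulVec y, ← transpose_partCharMat_mul_self hsurj, ← mulVec_mulVec, h, mulVec_zero])

theorem dotProduct_mulVec_partCharMat_mulVec {A : Matrix (Fin n) (Fin n) ℝ} {P : Fin n → Fin k}
    (hsurj : Function.Surjective P) {y : Fin k → ℝ} {t : ℝ} (hy : quotMat A P P *ᵥ y = t • y) :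
    partCharMat P *ᵥ y ⬝ᵥ A *ᵥ partCharMat P *ᵥ y
      = t * (partCharMat P *ᵥ y ⬝ᵥ partCharMat P *ᵥ y) := by
  have hnorm : partCharMat P *ᵥ y ⬝ᵥ partCharMat P *ᵥ y = y ⬝ᵥ y := by
    simpa [transpose_partCharMat_mul_self hsurj] using
      (dotProduct_transpose_mul_mul_mulVec (partCharMat P) 1 y).symm
  rw [← dotProduct_transpose_mul_mul_mulVec, ← quotMat_eq_transpose_mul_mul, hy,
    dotProduct_smul, smul_eq_mul, hnorm]

theorem blockRegular_of_mulVec_partCharMat_eq_iSup_smul {A : Matrix (Fin n) (Fin n) ℝ}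
    (hA : A.IsHermitian) (hnonneg : ∀ i j, 0 ≤ A i j) (hirr : MatIrred A) {P : Fin n → Fin k}
    (hsurj : Function.Surjective P)
    (hoff : ∀ p q : Fin k, p ≠ q → BlockRegular A (partSet P p) (partSet P q))
    {y : Fin k → ℝ} (hx0 : partCharMat P *ᵥ y ≠ 0)
    (hx : A *ᵥ (partCharMat P *ᵥ y) = (⨆ i, hA.eigenvalues i) • (partCharMat P *ᵥ y))
    (p : Fin k) : BlockRegular A (partSet P p) (partSet P p) := by
  obtain ⟨i, rfl⟩ := hsurj p
  have hyp : y (P i) ≠ 0 := by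
    have := hirr.abs_pos_of_mulVec_eq_iSup_smul hA hnonneg hx0 hx i
    rw [partCharMat_mulVec_apply, abs_pos] at this
    exact (div_ne_zero_iff.mp this).1
  exact (blockRowRegular_of_mulVec_partCharMat_eq_smul hx hyp
    fun q hq => (hoff _ q hq.symm).1).blockRegular hA

theorem iSup_eigenvalues_le_iSup_eigenvalues_quotMat [Nonempty (Fin n)]
    {A : Matrix (Fin n) (Fin n) ℝ} (hA : A.IsHermitian) (hnonneg : ∀ i j, 0 ≤ A i j)
    (hirr : MatIrred A) {P : Fin n → Fin k} (hB : (quotMat A P P).IsHermitian)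
    (hrow : ∀ p q, BlockRowRegular A (partSet P p) (partSet P q)) :
    (⨆ i, hA.eigenvalues i) ≤ ⨆ p, hB.eigenvalues p := by
  obtain ⟨v, hv0, hv⟩ := hA.exists_mulVec_eq_iSup_smul
  have hw := quotMat_mulVec_transpose_partCharMat hA hB hrow
    (hA.mulVec_abs_eq_iSup_smul hnonneg hv)
  have hw0 : (partCharMat P)ᵀ *ᵥ |v| ≠ 0 := fun h =>
    (transpose_partCharMat_mulVec_pos (hirr.abs_pos_of_mulVec_eq_iSup_smul hA hnonneg hv0 hv)
      (Classical.arbitrary _)).ne' (congrFun h _)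
  exact hB.le_of_dotProduct_mulVec_eq hB.eigenvalues_le_iSup hw0
    (by rw [hw, dotProduct_smul, smul_eq_mul])

end Partition

/-- for a symmetric irreducible nonnegative matrix `A` and a partition
with all off-diagonal blocks `A[P i, P j]` (`i ≠ j`) regular,
`μ₁(A) = μ₁(A|P×P)` if and only if all diagonal blocks `A[P i, P i]` are regular. -/
theorem stmt15 {n k : ℕ} (hn : 0 < n) (hk : 0 < k)
    (A : Matrix (Fin n) (Fin n) ℝ) (hA : A.IsHermitian)
    (hnonneg : ∀ i j, 0 ≤ A i j) (hirr : MatIrred A)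
    (P : Fin n → Fin k) (hsurj : Function.Surjective P)
    (hoff : ∀ i j : Fin k, i ≠ j → BlockRegular A (partSet P i) (partSet P j))
    (hB : (quotMat A P P).IsHermitian) :
    (⨆ i : Fin n, hA.eigenvalues i) = (⨆ p : Fin k, hB.eigenvalues p) ↔
      ∀ i : Fin k, BlockRegular A (partSet P i) (partSet P i) := by
  have : Nonempty (Fin k) := ⟨⟨0, hk⟩⟩
  have : Nonempty (Fin n) := ⟨⟨0, hn⟩⟩
  obtain ⟨y, hy0, hy⟩ := hB.exists_mulVec_eq_iSup_smul
  have hx0 := partCharMat_mulVec_ne_zero hsurj hy0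
  have hrayleigh := dotProduct_mulVec_partCharMat_mulVec hsurj hy
  have hνμ := hA.le_of_dotProduct_mulVec_eq hA.eigenvalues_le_iSup hx0 hrayleigh
  constructor
  · intro hμν
    exact blockRegular_of_mulVec_partCharMat_eq_iSup_smul hA hnonneg hirr hsurj hoff hx0
      (hA.mulVec_eq_smul_of_dotProduct_mulVec_eq hA.eigenvalues_le_iSup (hμν ▸ hrayleigh))
  · intro hdiag
    refine le_antisymm (iSup_eigenvalues_le_iSup_eigenvalues_quotMat hA hnonneg hirr hB
      fun p q => ?_) hνμ
    by_cases h : p = q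
    · exact h ▸ (hdiag p).1
    · exact (hoff p q h).1
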